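/- Let 0 < L ≤ U, let h : [L, U] → ℝ be positive, nondecreasing, and continuously differentiable, and let α > 0. Suppose G : [L, U] → ℝ is continuous, nondecreasing, and satisfies G(v)·h(v) − ∫_L^v G(u)·h'(u) du ≥ h(v)/α for all v ∈ [L, U]. Then G(v) ≥ (1/α)·(1 + ln(h(v)/h(L))) for all v ∈ [L, U]. Consequently, if G(U) ≤ 1, then α ≥ 1 + ln(h(U)/h(L)). -/

import Mathlib

/-!
Write `F v = ∫_L^v G h'` and `c = 1/α`, so the hypothesis reads `c h + F ≤ G h`. Since `F' = G h'`,
the function `Φ = F / h - c log h` has `Φ' = h' (G h - F - c h) / h² ≥ 0`, hence `Φ v ≥ Φ L`, i.e.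
`F v / h v ≥ c log (h v / h L)`. Dividing the hypothesis by `h v` gives
`G v ≥ c + F v / h v ≥ c (1 + log (h v / h L))`; at `v = U` with `G U ≤ 1` this is `α ≥ 1 + log (h U / h L)`.
-/

open Real Set intervalIntegral

lemma HasDerivAt.nonneg_of_monotoneOn_Icc {f : ℝ → ℝ} {f' a b x : ℝ}
    (hf : MonotoneOn f (Icc a b)) (hx : x ∈ Ioo a b) (hd : HasDerivAt f f' x) : 0 ≤ f' :=
  hd.hasDerivWithinAt.nonneg_of_monotoneOn (uniqueDiffWithinAt_iff_accPt.mp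
    (uniqueDiffOn_Icc (hx.1.trans hx.2) x (Ioo_subset_Icc_self hx))) hf

lemma ContinuousOn.continuousOn_primitive_Icc {f : ℝ → ℝ} {a b : ℝ}
    (hf : ContinuousOn f (Icc a b)) : ContinuousOn (fun t => ∫ u in a..t, f u) (Icc a b) := by
  intro x hx
  have hab : uIcc a b = Icc a b := uIcc_of_le (hx.1.trans hx.2)
  rw [← hab] at hf hx ⊢
  exact continuousOn_primitive_interval (hf.integrableOn_compact isCompact_uIcc) x hx

lemma ContinuousOn.hasDerivAt_primitive_of_mem_Ioo {f : ℝ → ℝ} {a b x : ℝ}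
    (hf : ContinuousOn f (Icc a b)) (hx : x ∈ Ioo a b) :
    HasDerivAt (fun t => ∫ u in a..t, f u) (f x) x := by
  refine integral_hasDerivAt_right ?_ ((hf.mono Ioo_subset_Icc_self).stronglyMeasurableAtFilter
    isOpen_Ioo x hx) (hf.continuousAt (Icc_mem_nhds hx.1 hx.2))
  refine (hf.mono ?_).intervalIntegrable
  rw [uIcc_of_le hx.1.le]
  exact Icc_subset_Icc_right hx.2.le

section

variable {a b c : ℝ} {h h' G : ℝ → ℝ}

lemma monotoneOn_primitive_div_sub_mul_log (hpos : ∀ v ∈ Icc a b, 0 < h v)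
    (hmono : MonotoneOn h (Icc a b)) (hderiv : ∀ v ∈ Icc a b, HasDerivAt h (h' v) v)
    (hcont : ContinuousOn (fun u => G u * h' u) (Icc a b))
    (hineq : ∀ v ∈ Ioo a b, c * h v ≤ G v * h v - ∫ u in a..v, G u * h' u) :
    MonotoneOn (fun v => (∫ u in a..v, G u * h' u) / h v - c * log (h v)) (Icc a b) := by
  set F : ℝ → ℝ := fun v => ∫ u in a..v, G u * h' u
  have hh_cont : ContinuousOn h (Icc a b) := fun v hv =>
    (hderiv v hv).continuousAt.continuousWithinAt
  have hh_ne : ∀ v ∈ Icc a b, h v ≠ 0 := fun v hv => (hpos v hv).ne'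
  refine monotoneOn_of_hasDerivWithinAt_nonneg (convex_Icc a b)
    ((hcont.continuousOn_primitive_Icc.div hh_cont hh_ne).sub
      ((hh_cont.log hh_ne).const_smul c))
    (f' := fun v => (G v * h' v * h v - F v * h' v) / h v ^ 2 - c * (h' v / h v)) ?_ ?_
    <;> rw [interior_Icc]
  · intro v hv
    have hvI := Ioo_subset_Icc_self hv
    exact (((hcont.hasDerivAt_primitive_of_mem_Ioo hv).div (hderiv v hvI) (hh_ne v hvI)).sub
      (((hderiv v hvI).log (hh_ne v hvI)).const_mul c)).hasDerivWithinAt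
  · intro v hv
    have hvI := Ioo_subset_Icc_self hv
    have hhv := hpos v hvI
    have hh'v : 0 ≤ h' v := (hderiv v hvI).nonneg_of_monotoneOn_Icc hmono hv
    have hgap : 0 ≤ G v * h v - F v - c * h v := by linarith [hineq v hv]
    calc (0 : ℝ) ≤ h' v * (G v * h v - F v - c * h v) / h v ^ 2 := by positivity
      _ = _ := by field_simp

theorem mul_one_add_log_div_le_of_le_mul_sub_primitive (hpos : ∀ v ∈ Icc a b, 0 < h v)
    (hmono : MonotoneOn h (Icc a b)) (hderiv : ∀ v ∈ Icc a b, HasDerivAt h (h' v) v)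
    (hcont : ContinuousOn (fun u => G u * h' u) (Icc a b))
    (hineq : ∀ v ∈ Icc a b, c * h v ≤ G v * h v - ∫ u in a..v, G u * h' u) :
    ∀ v ∈ Icc a b, c * (1 + log (h v / h a)) ≤ G v := by
  intro v hv
  have ha : a ∈ Icc a b := left_mem_Icc.mpr (hv.1.trans hv.2)
  have hΦ := monotoneOn_primitive_div_sub_mul_log hpos hmono hderiv hcont
    (fun v hv => hineq v (Ioo_subset_Icc_self hv)) ha hv hv.1
  simp only [integral_same, zero_div, zero_sub] at hΦ
  have hhv := hpos v hv
  have hG : (∫ u in a..v, G u * h' u) / h v ≤ G v - c := by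
    rw [div_le_iff₀ hhv]
    linarith [hineq v hv]
  rw [log_div hhv.ne' (hpos a ha).ne']
  linarith

end

theorem stmt_14_general (L U α : ℝ) (hLU : L ≤ U) (hα : 0 < α)
    (h h' : ℝ → ℝ)
    (hpos : ∀ v ∈ Set.Icc L U, 0 < h v)
    (hmono : MonotoneOn h (Set.Icc L U))
    (hderiv : ∀ v ∈ Set.Icc L U, HasDerivAt h (h' v) v)
    (hderiv_cont : ContinuousOn h' (Set.Icc L U))
    (G : ℝ → ℝ)
    (hG_cont : ContinuousOn G (Set.Icc L U))
    (hG_ineq : ∀ v ∈ Set.Icc L U,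
      h v / α ≤ G v * h v - ∫ u in L..v, G u * h' u) :
    (∀ v ∈ Set.Icc L U, (1 / α) * (1 + Real.log (h v / h L)) ≤ G v) ∧
    (G U ≤ 1 → 1 + Real.log (h U / h L) ≤ α) := by
  have hbound := mul_one_add_log_div_le_of_le_mul_sub_primitive hpos hmono hderiv
    (hG_cont.mul hderiv_cont) fun v hv => by rw [one_div_mul_eq_div]; exact hG_ineq v hv
  refine ⟨hbound, fun hGU => ?_⟩
  have hU := (hbound U (right_mem_Icc.mpr hLU)).trans hGU
  rwa [one_div, inv_mul_le_iff₀ hα, mul_one] at hU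

theorem stmt_14 (L U α : ℝ) (hL : 0 < L) (hLU : L ≤ U) (hα : 0 < α)
    (h h' : ℝ → ℝ)
    (hpos : ∀ v ∈ Set.Icc L U, 0 < h v)
    (hmono : MonotoneOn h (Set.Icc L U))
    (hderiv : ∀ v ∈ Set.Icc L U, HasDerivAt h (h' v) v)
    (hderiv_cont : ContinuousOn h' (Set.Icc L U))
    (G : ℝ → ℝ)
    (hG_cont : ContinuousOn G (Set.Icc L U))
    (hG_mono : MonotoneOn G (Set.Icc L U))
    (hG_ineq : ∀ v ∈ Set.Icc L U,
      h v / α ≤ G v * h v - ∫ u in L..v, G u * h' u) :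
    (∀ v ∈ Set.Icc L U, (1 / α) * (1 + Real.log (h v / h L)) ≤ G v) ∧
    (G U ≤ 1 → 1 + Real.log (h U / h L) ≤ α) :=
  stmt_14_general L U α hLU hα h h' hpos hmono hderiv hderiv_cont G hG_cont hG_ineq
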